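/- Let V be a 2m-dimensional F₂-vector space with symplectic basis for a non-degenerate alternate form B, and let Kap_{4,B}(2m) be the Kaplansky algebra on basis {e_u : u ∈ V} with bracket [e_u,e_v] = B(u,v)e_{u+v} for u≠v (zero otherwise, and e_0 allowed). Let O = K[p₁,…,p_m,q₁,…,q_m]/(p_i²,q_i²) over a field K of characteristic 2 with the bracket [f,g] = Σ_i (1+p_i)(1+q_i)(∂_{p_i}f ∂_{q_i}g + ∂_{q_i}f ∂_{p_i}g). Then the linear map sending e_u to f_u = (1+p₁)^{u₁}⋯(1+p_m)^{u_m}(1+q₁)^{u_{m+1}}⋯(1+q_m)^{u_{2m}} is a Lie algebra isomorphism (after extension of scalars to K). -/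

import Mathlib

open Finset

/-- Exponent multi-indices for `K[p₁,…,p_m,q₁,…,q_m]/(pᵢ²,qᵢ²)`. -/
abbrev Expo (m : ℕ) := (Fin m → Bool) × (Fin m → Bool)

/-- The truncated polynomial algebra, as coefficient functions. -/
abbrev TO (K : Type*) (m : ℕ) := Expo m → K

/-- The `F₂`-space `V = F₂^{2m}`, written as pairs. -/
abbrev Vsp (m : ℕ) := (Fin m → ZMod 2) × (Fin m → ZMod 2)

variable {K : Type*} [Field K] {m : ℕ}

/-- Multiplication of truncated polynomials. -/
def mulO (f g : TO K m) : TO K m := fun e =>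
  ∑ a : Expo m, ∑ b : Expo m,
    if (∀ i, ¬(a.1 i = true ∧ b.1 i = true) ∧ ((a.1 i = true ∨ b.1 i = true) ↔ e.1 i = true)
          ∧ ¬(a.2 i = true ∧ b.2 i = true) ∧ ((a.2 i = true ∨ b.2 i = true) ↔ e.2 i = true))
      then f a * g b else 0

/-- `∂_{p_i}`. -/
def dp (i : Fin m) (f : TO K m) : TO K m := fun e =>
  if e.1 i = false then f (Function.update e.1 i true, e.2) else 0

/-- `∂_{q_i}`. -/
def dq (i : Fin m) (f : TO K m) : TO K m := fun e =>
  if e.2 i = false then f (e.1, Function.update e.2 i true) else 0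

/-- Multiplication by `1 + p_i`. -/
def mp (i : Fin m) (f : TO K m) : TO K m := fun e =>
  f e + if e.1 i = true then f (Function.update e.1 i false, e.2) else 0

/-- Multiplication by `1 + q_i`. -/
def mq (i : Fin m) (f : TO K m) : TO K m := fun e =>
  f e + if e.2 i = true then f (e.1, Function.update e.2 i false) else 0

/-- `[f,g] = Σᵢ (1+pᵢ)(1+qᵢ)(∂_{pᵢ}f·∂_{qᵢ}g + ∂_{qᵢ}f·∂_{pᵢ}g)`. -/
def br13 (f g : TO K m) : TO K m :=
  ∑ i : Fin m, mp i (mq i (mulO (dp i f) (dq i g) + mulO (dq i f) (dp i g)))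

/-- Embedding of `F₂` into `K`. -/
def z2k (K : Type*) [Field K] (a : ZMod 2) : K := if a = 1 then 1 else 0

/-- The Kaplansky bracket of `Kap_{4,B}(2m)` (extension of scalars to `K`):
`[e_u,e_v] = B(u,v)e_{u+v}` for `u ≠ v`, zero otherwise, where `B` is the standard
symplectic form `B(u,v) = Σᵢ(uᵢv_{m+i} + u_{m+i}vᵢ)`. -/
def brK (f g : Vsp m → K) : Vsp m → K := fun w =>
  ∑ u : Vsp m, ∑ v : Vsp m,
    f u * g v * (if u ≠ v ∧ w = u + v
      then z2k K (∑ i, (u.1 i * v.2 i + u.2 i * v.1 i)) else 0)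

/-- The linear map sending `e_u` to
`f_u = (1+p₁)^{u₁}⋯(1+p_m)^{u_m}(1+q₁)^{u_{m+1}}⋯(1+q_m)^{u_{2m}}`:
the coefficient of a monomial `e` in `f_u` is 1 iff the support of `e` lies in `u`. -/
def Phi (c : Vsp m → K) : TO K m := fun e =>
  ∑ u : Vsp m,
    c u * (if (∀ i, (e.1 i = true → u.1 i = 1) ∧ (e.2 i = true → u.2 i = 1))
      then 1 else 0)

/-!
Identify both index sets with the Boolean lattice of subsets of the `2m` variables by taking
supports. Then `f_u` has coefficient `1` exactly at the monomials whose support lies below `u`,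
so `Phi` is the zeta transform of this lattice. In characteristic 2 the zeta transform is an
involution, because every nontrivial interval `[x, z]` carries the fixed-point-free involution
`y ↦ x ⊔ (z \ y)` and hence has even cardinality. The same parity count gives `f_u f_v = f_{u+v}`.
Together with `∂_{p_i} f_u = u_i f_{u + δ_i}` and `(1 + p_i) f_u = f_{u + δ_i}` this yields
`[f_u, f_v] = B(u, v) f_{u+v}`, and bilinearity of both brackets finishes the proof.
-/

theorem Pi.le_iff_apply_le_and_forall_ne {ι : Type*} {π : ι → Type*} [DecidableEq ι]
    [∀ i, Preorder (π i)] {x y : ∀ i, π i} (i : ι) :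
    x ≤ y ↔ x i ≤ y i ∧ ∀ j ≠ i, x j ≤ y j := by
  simpa using le_update_iff (x := x) (y := y) (i := i) (a := y i)

section BooleanAlgebra

variable {α R : Type*} [BooleanAlgebra α]

theorem inf_eq_bot_and_sup_eq_iff {a b e : α} : a ⊓ b = ⊥ ∧ a ⊔ b = e ↔ a ≤ e ∧ b = e \ a := by
  constructor
  · rintro ⟨hab, rfl⟩
    exact ⟨le_sup_left, ((disjoint_iff.mpr hab).sdiff_eq_of_sup_eq rfl).symm⟩
  · rintro ⟨hae, rfl⟩
    exact ⟨inf_sdiff_self_right, sup_sdiff_cancel_right hae⟩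

theorem inf_eq_sdiff_iff_le_symmDiff {e x y : α} : e ⊓ x = e \ y ↔ e ≤ symmDiff x y := by
  rw [← symmDiff_eq_bot, sdiff_eq, ← inf_symmDiff_distrib_left, ← sdiff_eq_bot_iff, sdiff_eq,
    compl_symmDiff, symmDiff_eq, compl_compl, bihimp_eq', inf_comm yᶜ]

variable [Fintype α] [DecidableEq α] [DecidableLE α] [Ring R] [CharP R 2]

theorem sum_ite_le_and_le_of_charTwo (x z : α) :
    ∑ y, (if x ≤ y ∧ y ≤ z then (1 : R) else 0) = if x = z then 1 else 0 := by
  split_ifs with hxz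
  · subst hxz
    rw [Finset.sum_eq_single x (fun y _ hy => if_neg fun h => hy (le_antisymm h.2 h.1))
      (by simp)]
    simp
  rw [← Finset.sum_filter]
  refine Finset.sum_involution (fun y _ => x ⊔ z \ y) (fun _ _ => CharTwo.add_self_eq_zero 1)
    ?_ ?_ ?_ <;> simp only [Finset.mem_filter, Finset.mem_univ, true_and]
  · rintro y ⟨hxy, hyz⟩ - hfix
    have hzy : z \ y = ⊥ :=
      disjoint_self.mp (disjoint_sdiff_self_left.mono_right (le_sup_right.trans_eq hfix))
    rw [hzy, sup_bot_eq] at hfix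
    exact hxz (hfix.trans (le_antisymm hyz (sdiff_eq_bot_iff.mp hzy)))
  · rintro y ⟨hxy, hyz⟩
    exact ⟨le_sup_left, sup_le (hxy.trans hyz) sdiff_le⟩
  · rintro y ⟨hxy, hyz⟩
    rw [sdiff_sup, sdiff_sdiff_right_self, inf_eq_right.mpr hyz, inf_comm, ← inf_sdiff_assoc,
      inf_eq_left.mpr hyz, sup_sdiff_self_right, sup_eq_right.mpr hxy]

variable (R) in
def upperSum (f : α → R) (x : α) : R := ∑ y, if x ≤ y then f y else 0

theorem upperSum_involutive : Function.Involutive (upperSum (α := α) R) := by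
  intro f
  funext x
  calc upperSum R (upperSum R f) x
      = ∑ z, f z * ∑ y, (if x ≤ y ∧ y ≤ z then 1 else 0) := by
        simp only [upperSum, Finset.mul_sum, mul_ite, mul_one, mul_zero, ite_and]
        rw [Finset.sum_comm]
        exact Finset.sum_congr rfl fun y _ => by split_ifs <;> simp
    _ = f x := by
        simp only [sum_ite_le_and_le_of_charTwo, mul_ite, mul_one, mul_zero,
          Finset.sum_ite_eq, Finset.mem_univ, if_true]

theorem sum_sum_ite_inf_eq_bot_and_sup_eq_of_charTwo (e x y : α) :
    ∑ a, ∑ b, (if a ⊓ b = ⊥ ∧ a ⊔ b = e then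
      (if a ≤ x then (1 : R) else 0) * (if b ≤ y then 1 else 0) else 0) =
      if e ≤ symmDiff x y then 1 else 0 := by
  have hinner : ∀ a, ∑ b, (if a ⊓ b = ⊥ ∧ a ⊔ b = e then
      (if a ≤ x then (1 : R) else 0) * (if b ≤ y then 1 else 0) else 0) =
      if e \ y ≤ a ∧ a ≤ e ⊓ x then 1 else 0 := by
    intro a
    simp only [inf_eq_bot_and_sup_eq_iff, ite_and, Finset.sum_ite_irrel, Finset.sum_ite_eq',
      Finset.mem_univ, if_true, Finset.sum_const_zero]
    have hcomm : e \ a ≤ y ↔ e \ y ≤ a := sdiff_le_comm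
    by_cases hae : a ≤ e <;> by_cases hax : a ≤ x <;> by_cases hya : e \ y ≤ a <;>
      simp [hae, hax, hya, hcomm, -sdiff_le_iff]
  simp only [Finset.sum_congr rfl fun a _ => hinner a, sum_ite_le_and_le_of_charTwo,
    eq_comm (a := e \ y), inf_eq_sdiff_iff_le_symmDiff]

end BooleanAlgebra

def zmodTwoEquivBool : ZMod 2 ≃ Bool where
  toFun a := decide (a = 1)
  invFun b := if b then 1 else 0
  left_inv a := by fin_cases a <;> rfl
  right_inv b := by cases b <;> rfl

variable (m) in
def vspEquivExpo : Vsp m ≃ Expo m :=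
  let e := Equiv.arrowCongr (Equiv.refl (Fin m)) zmodTwoEquivBool
  e.prodCongr e

theorem le_vspEquivExpo_iff {e : Expo m} {u : Vsp m} :
    e ≤ vspEquivExpo m u ↔ ∀ i, (e.1 i = true → u.1 i = 1) ∧ (e.2 i = true → u.2 i = 1) := by
  simp [vspEquivExpo, zmodTwoEquivBool, Prod.le_def, Pi.le_def, Bool.le_iff_imp, forall_and]

theorem vspEquivExpo_add (u v : Vsp m) :
    vspEquivExpo m (u + v) = symmDiff (vspEquivExpo m u) (vspEquivExpo m v) := by
  have h : ∀ a b : ZMod 2,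
      zmodTwoEquivBool (a + b) = (zmodTwoEquivBool a ^^ zmodTwoEquivBool b) := by
    decide
  ext i <;> simp [vspEquivExpo, Bool.symmDiff_eq_xor, h]

theorem vspEquivExpo_add_single_fst (u : Vsp m) (i : Fin m) :
    vspEquivExpo m (u + (Pi.single i 1, 0)) =
      (Function.update (vspEquivExpo m u).1 i !(vspEquivExpo m u).1 i, (vspEquivExpo m u).2) := by
  have h : ∀ a : ZMod 2, zmodTwoEquivBool (a + 1) = !zmodTwoEquivBool a := by decide
  ext j
  · by_cases hj : j = i
    · subst hj; simp [vspEquivExpo, h]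
    · simp [vspEquivExpo, hj]
  · simp [vspEquivExpo]

theorem vspEquivExpo_swap (u : Vsp m) : vspEquivExpo m u.swap = (vspEquivExpo m u).swap := rfl

theorem z2k_eq_ite (a : ZMod 2) : z2k K a = if zmodTwoEquivBool a then 1 else 0 := by
  simp [z2k, zmodTwoEquivBool]

theorem z2k_eq_castHom [CharP K 2] : z2k K = ZMod.castHom (dvd_refl 2) K := by
  funext a
  rcases (by decide : ∀ x : ZMod 2, x = 0 ∨ x = 1) a with rfl | rfl <;> simp [z2k]

theorem mulO_apply (f g : TO K m) (e : Expo m) :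
    mulO f g e = ∑ a, ∑ b, if a ⊓ b = ⊥ ∧ a ⊔ b = e then f a * g b else 0 := by
  refine Finset.sum_congr rfl fun a _ => Finset.sum_congr rfl fun b _ => if_congr ?_ rfl rfl
  simp only [Prod.ext_iff, funext_iff, Prod.fst_inf, Prod.snd_inf, Prod.fst_sup,
    Prod.snd_sup, Pi.inf_apply, Pi.sup_apply, Prod.fst_bot, Prod.snd_bot, Pi.bot_apply,
    ← forall_and]
  refine forall_congr' fun i => ?_
  generalize a.1 i = a₁, a.2 i = a₂, b.1 i = b₁, b.2 i = b₂, e.1 i = e₁, e.2 i = e₂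
  revert a₁ a₂ b₁ b₂ e₁ e₂
  decide

section LinearStructure

variable (K) in
def dpₗ (i : Fin m) : TO K m →ₗ[K] TO K m where
  toFun := dp i
  map_add' f g := by funext e; simp only [dp, Pi.add_apply]; split_ifs <;> simp
  map_smul' c f := by funext e; simp only [dp, Pi.smul_apply, smul_eq_mul]; split_ifs <;> simp

variable (K) in
def dqₗ (i : Fin m) : TO K m →ₗ[K] TO K m where
  toFun := dq i
  map_add' f g := by funext e; simp only [dq, Pi.add_apply]; split_ifs <;> simp
  map_smul' c f := by funext e; simp only [dq, Pi.smul_apply, smul_eq_mul]; split_ifs <;> simp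

variable (K) in
def mpₗ (i : Fin m) : TO K m →ₗ[K] TO K m where
  toFun := mp i
  map_add' f g := by
    funext e; simp only [mp, Pi.add_apply]; split_ifs <;> simp [add_add_add_comm]
  map_smul' c f := by
    funext e; simp only [mp, Pi.smul_apply, smul_eq_mul]; split_ifs <;> simp [mul_add]

variable (K) in
def mqₗ (i : Fin m) : TO K m →ₗ[K] TO K m where
  toFun := mq i
  map_add' f g := by
    funext e; simp only [mq, Pi.add_apply]; split_ifs <;> simp [add_add_add_comm]
  map_smul' c f := by
    funext e; simp only [mq, Pi.smul_apply, smul_eq_mul]; split_ifs <;> simp [mul_add]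

variable (K m) in
def mulOₗ : TO K m →ₗ[K] TO K m →ₗ[K] TO K m :=
  LinearMap.mk₂ K mulO
    (fun f f' g => by funext e; simp [mulO, add_mul, ite_add_zero, Finset.sum_add_distrib])
    (fun c f g => by funext e; simp [mulO, Finset.mul_sum, mul_ite, mul_assoc])
    (fun f g g' => by funext e; simp [mulO, mul_add, ite_add_zero, Finset.sum_add_distrib])
    (fun c f g => by funext e; simp [mulO, Finset.mul_sum, mul_ite, mul_left_comm])

theorem mulOₗ_apply (f g : TO K m) : mulOₗ K m f g = mulO f g := rfl

theorem mpₗ_apply (i : Fin m) (f : TO K m) : mpₗ K i f = mp i f := rfl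

theorem mqₗ_apply (i : Fin m) (f : TO K m) : mqₗ K i f = mq i f := rfl

variable (K m) in
def br13ₗ : TO K m →ₗ[K] TO K m →ₗ[K] TO K m :=
  ∑ i, ((mulOₗ K m).compl₁₂ (dpₗ K i) (dqₗ K i) + (mulOₗ K m).compl₁₂ (dqₗ K i) (dpₗ K i)).compr₂
    (mpₗ K i ∘ₗ mqₗ K i)

theorem br13ₗ_apply (f g : TO K m) : br13ₗ K m f g = br13 f g := by
  simp only [br13ₗ, LinearMap.sum_apply, LinearMap.compr₂_apply, LinearMap.add_apply,
    LinearMap.compl₁₂_apply, LinearMap.comp_apply]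
  rfl

theorem br13_sum_smul_sum_smul {ι κ : Type*} [Fintype ι] [Fintype κ] (c : ι → K) (d : κ → K)
    (F : ι → TO K m) (G : κ → TO K m) :
    br13 (∑ u, c u • F u) (∑ v, d v • G v) = ∑ u, ∑ v, (c u * d v) • br13 (F u) (G v) := by
  simp only [← br13ₗ_apply, map_sum, map_smul, LinearMap.sum_apply, LinearMap.smul_apply,
    Finset.smul_sum, smul_smul]
  rw [Finset.sum_comm]
  simp only [mul_comm (d _)]

end LinearStructure

section Basis

open scoped Classical

variable (K) in
/-- The paper's `f_u`. -/
noncomputable def fBasis (u : Vsp m) : TO K m := fun e => if e ≤ vspEquivExpo m u then 1 else 0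

theorem Phi_eq_sum_smul_fBasis (c : Vsp m → K) : Phi c = ∑ u, c u • fBasis K u := by
  funext e
  simp [Phi, fBasis, Finset.sum_apply, le_vspEquivExpo_iff]

theorem Phi_eq_upperSum (c : Vsp m → K) : Phi c = upperSum K (c ∘ (vspEquivExpo m).symm) := by
  funext e
  rw [upperSum, ← Equiv.sum_comp (vspEquivExpo m)]
  simp [Phi, le_vspEquivExpo_iff]

theorem Phi_bijective [CharP K 2] : Function.Bijective (Phi (K := K) (m := m)) := by
  have hPhi : Phi (K := K) (m := m) =
      upperSum K ∘ Equiv.arrowCongr (vspEquivExpo m) (Equiv.refl K) :=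
    funext Phi_eq_upperSum
  rw [hPhi]
  exact upperSum_involutive.bijective.comp (Equiv.bijective _)

theorem fBasis_comp_swap (u : Vsp m) : fBasis K u ∘ Prod.swap = fBasis K u.swap := by
  funext e
  exact if_congr (by simpa [vspEquivExpo_swap] using
    Prod.swap_le_swap (x := e) (y := (vspEquivExpo m u).swap)) rfl rfl

theorem mulO_fBasis [CharP K 2] (u v : Vsp m) :
    mulO (fBasis K u) (fBasis K v) = fBasis K (u + v) := by
  funext e
  simp only [mulO_apply, fBasis, sum_sum_ite_inf_eq_bot_and_sup_eq_of_charTwo, vspEquivExpo_add]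

/- Adding `(Pi.single i 1, 0)` flips `u_i`: for `u_i = 1` this lowers the exponent of
`1 + p_i`, for `u_i = 0` the coefficient vanishes. -/
theorem dp_fBasis (i : Fin m) (u : Vsp m) :
    dp i (fBasis K u) = z2k K (u.1 i) • fBasis K (u + (Pi.single i 1, 0)) := by
  funext e
  rw [z2k_eq_ite, show zmodTwoEquivBool (u.1 i) = (vspEquivExpo m u).1 i from rfl]
  simp +contextual only [dp, fBasis, vspEquivExpo_add_single_fst, Pi.smul_apply, smul_eq_mul,
    Prod.le_def, Pi.le_iff_apply_le_and_forall_ne (x := e.1) i, Function.update_apply,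
    update_le_iff, if_true, if_false]
  generalize (vspEquivExpo m u).1 i = b, e.1 i = a
  cases a <;> cases b <;> simp [Bool.le_iff_imp]

-- `(1 + p_i)² = 1` in characteristic 2.
theorem mp_fBasis [CharP K 2] (i : Fin m) (u : Vsp m) :
    mp i (fBasis K u) = fBasis K (u + (Pi.single i 1, 0)) := by
  funext e
  simp +contextual only [mp, fBasis, vspEquivExpo_add_single_fst, Prod.le_def,
    Pi.le_iff_apply_le_and_forall_ne (x := e.1) i, Function.update_apply, update_le_iff,
    if_true, if_false]
  generalize (vspEquivExpo m u).1 i = b, e.1 i = a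
  cases a <;> cases b <;> simp [Bool.le_iff_imp, CharTwo.add_self_eq_zero]

theorem dq_fBasis (i : Fin m) (u : Vsp m) :
    dq i (fBasis K u) = z2k K (u.2 i) • fBasis K (u + (0, Pi.single i 1)) := by
  calc dq i (fBasis K u) = dp i (fBasis K u ∘ Prod.swap) ∘ Prod.swap := rfl
    _ = (z2k K (u.2 i) • fBasis K (u.swap + (Pi.single i 1, 0))) ∘ Prod.swap := by
      rw [fBasis_comp_swap, dp_fBasis]; rfl
    _ = _ := by
      rw [Pi.smul_comp, fBasis_comp_swap]
      congr 2

theorem mq_fBasis [CharP K 2] (i : Fin m) (u : Vsp m) :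
    mq i (fBasis K u) = fBasis K (u + (0, Pi.single i 1)) := by
  calc mq i (fBasis K u) = mp i (fBasis K u ∘ Prod.swap) ∘ Prod.swap := rfl
    _ = fBasis K (u.swap + (Pi.single i 1, 0)) ∘ Prod.swap := by
      rw [fBasis_comp_swap, mp_fBasis]
    _ = _ := by
      rw [fBasis_comp_swap]
      congr 1

def symplecticForm (u v : Vsp m) : ZMod 2 := ∑ i, (u.1 i * v.2 i + u.2 i * v.1 i)

theorem symplecticForm_self (u : Vsp m) : symplecticForm u u = 0 :=
  Finset.sum_eq_zero fun i _ => by rw [mul_comm]; exact ZModModule.add_self _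

theorem z2k_symplecticForm [CharP K 2] (u v : Vsp m) :
    z2k K (symplecticForm u v) =
      ∑ i, (z2k K (u.1 i) * z2k K (v.2 i) + z2k K (u.2 i) * z2k K (v.1 i)) := by
  simp [symplecticForm, z2k_eq_castHom]

theorem br13_fBasis [CharP K 2] (u v : Vsp m) :
    br13 (fBasis K u) (fBasis K v) = z2k K (symplecticForm u v) • fBasis K (u + v) := by
  have cancel : ∀ a b c d : Vsp m, a + b = c + d → u + a + (v + b) + c + d = u + v := by
    intro a b c d h
    rw [show u + a + (v + b) + c + d = u + v + (a + b + (c + d)) by abel, h,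
      ZModModule.add_self, add_zero]
  rw [br13, z2k_symplecticForm, Finset.sum_smul]
  refine Finset.sum_congr rfl fun i _ => ?_
  rw [dp_fBasis, dq_fBasis, dq_fBasis, dp_fBasis, ← mpₗ_apply, ← mqₗ_apply, ← mulOₗ_apply,
    ← mulOₗ_apply]
  simp only [map_add, map_smul, LinearMap.smul_apply, smul_smul, mulOₗ_apply, mulO_fBasis,
    mqₗ_apply, mq_fBasis, mpₗ_apply, mp_fBasis]
  rw [cancel _ _ _ _ (add_comm _ _), cancel _ _ _ _ rfl, ← add_smul, mul_comm (z2k K (v.2 i)),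
    mul_comm (z2k K (v.1 i))]

theorem brK_apply_eq (f g : Vsp m → K) (w : Vsp m) :
    brK f g w = ∑ u, ∑ v, if w = u + v then f u * g v * z2k K (symplecticForm u v) else 0 := by
  refine Finset.sum_congr rfl fun u _ => Finset.sum_congr rfl fun v _ => ?_
  by_cases huv : u = v
  · subst huv
    simp [symplecticForm_self u, z2k]
  · simp [huv, symplecticForm]

theorem Phi_brK (f g : Vsp m → K) :
    Phi (brK f g) = ∑ u, ∑ v, (f u * g v * z2k K (symplecticForm u v)) • fBasis K (u + v) := by
  simp only [Phi_eq_sum_smul_fBasis, brK_apply_eq, Finset.sum_smul, ite_smul, zero_smul]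
  rw [Finset.sum_comm]
  refine Finset.sum_congr rfl fun u _ => ?_
  rw [Finset.sum_comm]
  simp

end Basis

/-- over a field of characteristic 2, `e_u ↦ f_u` is a Lie algebra
isomorphism from `Kap_{4,B}(2m)` onto the truncated polynomial algebra with the
bracket `[f,g] = Σᵢ (1+pᵢ)(1+qᵢ)(∂_{pᵢ}f ∂_{qᵢ}g + ∂_{qᵢ}f ∂_{pᵢ}g)`. -/
theorem stmt15 (K : Type*) [Field K] [CharP K 2] (m : ℕ) :
    Function.Bijective (Phi (K := K) (m := m)) ∧
    (∀ f g : Vsp m → K, Phi (brK f g) = br13 (Phi f) (Phi g)) := by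
  refine ⟨Phi_bijective, fun f g => ?_⟩
  rw [Phi_brK, Phi_eq_sum_smul_fBasis f, Phi_eq_sum_smul_fBasis g, br13_sum_smul_sum_smul]
  simp only [br13_fBasis, smul_smul]
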